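/- (Base point bound) If the divisor C has a base point P, i.e., L(C) = L(C - P), then any algebraic geometric code with designed minimum support C and defined with a divisor D whose support avoids P has minimum distance d >= deg C + 1. -/

import Mathlib

noncomputable section

/-- Degree of a divisor, where divisors on the curve are modeled as finitely
supported integer valued functions on the set of rational points. -/
def degr {Point : Type*} (D : Point →₀ ℤ) : ℤ := D.sum fun _ n => n

/-- An abstract model of a smooth projective absolutely irreducible curve over a field,
recording the data used in the paper: the dimension `l D` of the Riemann-Roch space
`L(D)`, the genus `g`, a canonical divisor `K`, and linear equivalence `lin`,
together with their basic properties (Riemann-Roch, monotonicity, semigroup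
properties of nongaps, etc.). -/
structure Curve (Point : Type*) where
  /-- `l D = dim L(D)` -/
  l : (Point →₀ ℤ) → ℕ
  /-- the genus -/
  g : ℕ
  /-- a canonical divisor -/
  K : Point →₀ ℤ
  /-- linear equivalence of divisors -/
  lin : (Point →₀ ℤ) → (Point →₀ ℤ) → Prop
  lin_refl : ∀ A, lin A A
  lin_symm : ∀ {A B}, lin A B → lin B A
  lin_trans : ∀ {A B C}, lin A B → lin B C → lin A C
  lin_add : ∀ {A B} (E : Point →₀ ℤ), lin A B → lin (A + E) (B + E)
  deg_lin : ∀ {A B}, lin A B → degr A = degr B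
  l_lin : ∀ {A B}, lin A B → l A = l B
  l_zero : l 0 = 1
  l_neg : ∀ {D}, degr D < 0 → l D = 0
  l_mono : ∀ (D : Point →₀ ℤ) (P : Point), l D ≤ l (D + Finsupp.single P 1)
  l_step : ∀ (D : Point →₀ ℤ) (P : Point), l (D + Finsupp.single P 1) ≤ l D + 1
  /-- Riemann-Roch -/
  rr : ∀ D : Point →₀ ℤ, (l D : ℤ) - l (K - D) = degr D + 1 - g
  lin_of_deg_zero : ∀ {D}, l D ≠ 0 → degr D = 0 → lin D 0
  /-- the semigroup property of `Γ_P` -/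
  gamma_add : ∀ (P : Point) {A B}, l A ≠ l (A - Finsupp.single P 1) →
      l B ≠ l (B - Finsupp.single P 1) → l (A + B) ≠ l (A + B - Finsupp.single P 1)
  eff_add : ∀ {A B}, l A ≠ 0 → l B ≠ 0 → l (A + B) ≠ 0
  point_nongap : ∀ {P Q : Point}, P ≠ Q →
      l (Finsupp.single P 1) ≠ l (Finsupp.single P 1 - Finsupp.single Q 1)

variable {Point : Type*}

/-- `Γ_P` : divisor (classes) with no base point at `P`, i.e. `L(A) ≠ L(A-P)`. -/
def GammaP (X : Curve Point) (P : Point) : Set (Point →₀ ℤ) :=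
  {A | X.l A ≠ X.l (A - Finsupp.single P 1)}

/-- `Γ_S = ∩_{P ∈ S} Γ_P`, with the convention `Γ_∅ = Γ = {A : L(A) ≠ 0}`. -/
def GammaS (X : Curve Point) (S : Finset Point) : Set (Point →₀ ℤ) :=
  {A | (S = ∅ → X.l A ≠ 0) ∧ ∀ P ∈ S, A ∈ GammaP X P}

/-- `Γ(C; S, S') = {A : A ∈ Γ_S and A - C ∈ Γ_{S'}}`. -/
def GammaSet (X : Curve Point) (C : Point →₀ ℤ) (S S' : Finset Point) :
    Set (Point →₀ ℤ) :=
  {A | A ∈ GammaS X S ∧ A - C ∈ GammaS X S'}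

/-- `γ(C; S, S') = min {deg A : A ∈ Γ(C; S, S')}`. -/
def gammaMin (X : Curve Point) (C : Point →₀ ℤ) (S S' : Finset Point) : ℤ :=
  sInf (degr '' GammaSet X C S S')

/-- `Δ = {i : A_i ∈ Γ_{P_i} and A_i - C ∉ Γ_{P_i}}` for indices `1 ≤ i ≤ n`. -/
def Delta (X : Curve Point) (C : Point →₀ ℤ) (n : ℕ) (A : ℕ → Point →₀ ℤ)
    (P : ℕ → Point) : Set ℕ :=
  {i | 1 ≤ i ∧ i ≤ n ∧ A i ∈ GammaP X (P i) ∧ A i - C ∉ GammaP X (P i)}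

/-- `Δ' = {i : A_i ∉ Γ_{P_i} and A_i - C ∈ Γ_{P_i}}` for indices `1 ≤ i ≤ n`. -/
def Delta' (X : Curve Point) (C : Point →₀ ℤ) (n : ℕ) (A : ℕ → Point →₀ ℤ)
    (P : ℕ → Point) : Set ℕ :=
  {i | 1 ≤ i ∧ i ≤ n ∧ A i ∉ GammaP X (P i) ∧ A i - C ∈ GammaP X (P i)}

lemma degr_single (P : Point) : degr (Finsupp.single P (1 : ℤ)) = 1 := by
  simp [degr]

lemma degr_sub (A B : Point →₀ ℤ) : degr (A - B) = degr A - degr B :=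
  Finsupp.sum_sub_index fun _ _ _ => rfl

lemma eq_sum_single_support_of_le_one {A : Point →₀ ℤ} (h0 : 0 ≤ A) (h1 : ∀ Q, A Q ≤ 1) :
    A = ∑ Q ∈ A.support, Finsupp.single Q 1 := by
  conv_lhs => rw [← Finsupp.sum_single A]
  refine Finset.sum_congr rfl fun Q hQ => ?_
  have hQ0 : A Q ≠ 0 := Finsupp.mem_support_iff.mp hQ
  have hQ1 : A Q = 1 := le_antisymm (h1 Q) (by have := h0 Q; simp only [Finsupp.coe_zero, Pi.zero_apply] at this; omega)
  rw [hQ1]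

namespace Curve

variable (X : Curve Point)

lemma zero_mem_GammaP (P : Point) : (0 : Point →₀ ℤ) ∈ GammaP X P := by
  have hneg : X.l (0 - Finsupp.single P 1) = 0 :=
    X.l_neg (by rw [degr_sub, degr_single]; simp [degr])
  simp only [GammaP, Set.mem_ofPred_eq, X.l_zero, hneg]
  exact one_ne_zero

/-- `Γ_P` is a semigroup containing every point other than `P`. -/
lemma sum_single_mem_GammaP (P : Point) (s : Finset Point) (hP : P ∉ s) :
    (∑ Q ∈ s, Finsupp.single Q 1) ∈ GammaP X P := by
  classical
  induction s using Finset.induction with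
  | empty => exact X.zero_mem_GammaP P
  | @insert Q s hQ ih =>
    rw [Finset.sum_insert hQ]
    exact X.gamma_add P (X.point_nongap (fun h => hP (h ▸ Finset.mem_insert_self Q s)))
      (ih fun h => hP (Finset.mem_insert_of_mem h))

lemma mem_GammaP_of_lin {A B : Point →₀ ℤ} (P : Point) (hAB : X.lin A B)
    (hA : A ∈ GammaP X P) : B ∈ GammaP X P := by
  have hAB' : X.lin (A - Finsupp.single P 1) (B - Finsupp.single P 1) := by
    simpa [sub_eq_add_neg] using X.lin_add (-Finsupp.single P 1) hAB
  simpa only [GammaP, Set.mem_ofPred_eq, X.l_lin hAB, X.l_lin hAB'] using hA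

lemma lin_of_l_sub_ne_zero {A B : Point →₀ ℤ} (hl : X.l (A - B) ≠ 0)
    (hdeg : degr A ≤ degr B) : X.lin A B := by
  have hnonneg : 0 ≤ degr (A - B) := not_lt.mp fun h => hl (X.l_neg h)
  have hzero : degr (A - B) = 0 := by rw [degr_sub] at hnonneg ⊢; omega
  simpa using X.lin_add B (X.lin_of_deg_zero hl hzero)

/-- A sum of distinct points other than `P` has no base point at `P`, and neither has
anything linearly equivalent to it; so it cannot have degree `≤ deg C`. -/
lemma degr_lt_of_base_point {C A : Point →₀ ℤ} {P : Point}
    (hbase : X.l C = X.l (C - Finsupp.single P 1)) (h0 : 0 ≤ A) (h1 : ∀ Q, A Q ≤ 1)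
    (hP : A P = 0) (hl : X.l (A - C) ≠ 0) : degr C < degr A := by
  by_contra! hdeg
  have hA : A ∈ GammaP X P := by
    rw [eq_sum_single_support_of_le_one h0 h1]
    exact X.sum_single_mem_GammaP P _ (Finsupp.notMem_support_iff.mpr hP)
  exact X.mem_GammaP_of_lin P (X.lin_of_l_sub_ne_zero hl hdeg) hA hbase

end Curve

/-- The code is modeled abstractly by the defining property that a nonzero codeword `c`
has a support divisor `D'` which is a sum of `wt(c)` distinct points of `D` with
`L(D' - C) ≠ 0`. -/
theorem base_point_bound (X : Curve Point) {F : Type*} [Field F] [DecidableEq F] {n : ℕ}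
    (Code : Submodule F (Fin n → F)) (D : Finset Point) (C : Point →₀ ℤ) (P : Point)
    (hP : P ∉ D)
    (hbase : X.l C = X.l (C - Finsupp.single P 1))
    (hcode : ∀ c ∈ Code, c ≠ 0 → ∃ D' : Point →₀ ℤ,
      0 ≤ D' ∧ (∀ Q, D' Q ≤ 1) ∧ D'.support ⊆ D ∧
      degr D' = (hammingNorm c : ℤ) ∧ X.l (D' - C) ≠ 0) :
    ∀ c ∈ Code, c ≠ 0 → degr C + 1 ≤ (hammingNorm c : ℤ) := by
  intro c hc hc0
  obtain ⟨D', hD0, hD1, hsupp, hdeg, hl⟩ := hcode c hc hc0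
  rw [← hdeg, Int.add_one_le_iff]
  exact X.degr_lt_of_base_point hbase hD0 hD1
    (Finsupp.notMem_support_iff.mp fun h => hP (hsupp h)) hl
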